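/- arXiv:2304.04374 — 4 statements merged into one kernel-verified Lean document; each statement's English description precedes it below -/
import Mathlib

section
/- Let W be a finite set, p, q : W → ℝ>0 probability mass functions on W (∑_w p(w) = ∑_w q(w) = 1), and h : W → ℝ with m ≤ h(w) for all w where m ≤ 0. Then ∑_w h(w)·p(w) ≥ (min_w p(w)/q(w)) · ∑_w h(w)·q(w) + |m| · ((min_w p(w)/q(w)) − 1), and ∑_w h(w)·p(w) ≤ (max_w p(w)/q(w)) · ∑_w h(w)·q(w) + |m| · ((max_w p(w)/q(w)) − 1). -/
open Finset Real

/-- Remark 2 — the core bounding inequality of Theorem 1 extended to bridge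
functions `h` that may take negative values but are bounded below by `m ≤ 0`. -/
theorem bounding_with_lower_bound {W : Type*} [Fintype W] [Nonempty W]
    (p q h : W → ℝ) (m : ℝ)
    (hp : ∀ w, 0 < p w) (hq : ∀ w, 0 < q w)
    (hp1 : ∑ w, p w = 1) (hq1 : ∑ w, q w = 1)
    (hm : m ≤ 0) (hhm : ∀ w, m ≤ h w) :
    ((univ.inf' univ_nonempty fun w => p w / q w) * ∑ w, h w * q w) +
        |m| * ((univ.inf' univ_nonempty fun w => p w / q w) - 1) ≤ (∑ w, h w * p w) ∧
      (∑ w, h w * p w) ≤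
        ((univ.sup' univ_nonempty fun w => p w / q w) * ∑ w, h w * q w) +
          |m| * ((univ.sup' univ_nonempty fun w => p w / q w) - 1) := by
  set c := univ.inf' univ_nonempty fun w => p w / q w with hc
  set C := univ.sup' univ_nonempty fun w => p w / q w with hC
  have habs : |m| = -m := abs_of_nonpos hm
  have hgp : ∑ w, (h w - m) * p w = (∑ w, h w * p w) - m := by
    simp [sub_mul, Finset.sum_sub_distrib, ← Finset.mul_sum, hp1]
  have hgq : ∑ w, (h w - m) * q w = (∑ w, h w * q w) - m := by
    simp [sub_mul, Finset.sum_sub_distrib, ← Finset.mul_sum, hq1]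
  have hlow : c * ((∑ w, h w * q w) - m) ≤ (∑ w, h w * p w) - m := by
    rw [← hgp, ← hgq, Finset.mul_sum]
    apply Finset.sum_le_sum
    intro w _
    have h1 : c ≤ p w / q w := inf'_le _ (mem_univ w)
    have h2 : c * q w ≤ p w := (le_div_iff₀ (hq w)).mp h1
    have h3 : 0 ≤ h w - m := sub_nonneg.mpr (hhm w)
    calc c * ((h w - m) * q w) = (h w - m) * (c * q w) := by ring
      _ ≤ (h w - m) * p w := by exact mul_le_mul_of_nonneg_left h2 h3
  have hhigh : (∑ w, h w * p w) - m ≤ C * ((∑ w, h w * q w) - m) := by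
    rw [← hgp, ← hgq, Finset.mul_sum]
    apply Finset.sum_le_sum
    intro w _
    have h1 : p w / q w ≤ C := Finset.le_sup' (fun w => p w / q w) (mem_univ w)
    have h2 : p w ≤ C * q w := (div_le_iff₀ (hq w)).mp h1
    have h3 : 0 ≤ h w - m := sub_nonneg.mpr (hhm w)
    calc (h w - m) * p w ≤ (h w - m) * (C * q w) := mul_le_mul_of_nonneg_left h2 h3
      _ = C * ((h w - m) * q w) := by ring
  rw [habs]
  constructor <;> nlinarith [hlow, hhigh]
end

section
/- In a finite probability space with random variables (U, X, W, Z, A, Y), A binary and Y taking values in a finite set 𝒴 ⊆ [0,∞), suppose: (i) Y^(a) ⟂ A | (X,U), positivity p(A=a | X,U) > 0, and consistency Y = Y^(a) on {A=a}; (ii) there is a nonnegative h with E[Y | A, X, U] = E[h(W,A,X) | A, X, U] a.s.; (iii) there is a nonnegative q with E[q(Z,A,X) | A, X, U] = p(U | 1−A, X)/p(U | A, X) a.s.; (iv) W ⟂ Z | (A, X, U). Then E[Y^(a) | A=1−a] = ∑_{w,z,x} h(w,a,x)·q(z,a,x)·p(w,z | A=a, x)·p(x | A=1−a). -/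
open Finset Real
open scoped Classical

/-- Probability of an event under a pmf `P` on a finite sample space. -/
noncomputable def pr {Ω : Type*} [Fintype Ω] (P : Ω → ℝ) (E : Ω → Prop) : ℝ :=
  ∑ ω, if E ω then P ω else 0

/-- Expectation of `f` under `P`. -/
noncomputable def ex {Ω : Type*} [Fintype Ω] (P : Ω → ℝ) (f : Ω → ℝ) : ℝ :=
  ∑ ω, P ω * f ω

/-- Conditional expectation `E[f | E]`. -/
noncomputable def ce {Ω : Type*} [Fintype Ω] (P : Ω → ℝ) (f : Ω → ℝ) (E : Ω → Prop) : ℝ :=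
  (∑ ω, if E ω then P ω * f ω else 0) / pr P E

/-- Conditional probability `P(E | F)`. -/
noncomputable def cpr {Ω : Type*} [Fintype Ω] (P : Ω → ℝ) (E F : Ω → Prop) : ℝ :=
  pr P (fun ω => E ω ∧ F ω) / pr P F

/-!
Stratify by `(X, U)`. On a stratum `s = (x, u)`, ignorability and consistency give
`E[Y^(a); ¬a, s] / p(¬a, s) = E[Y; a, s] / p(a, s)`, the outcome bridge replaces `Y` by `h(W)`,
and the treatment bridge turns the odds `p(¬a, s) / p(a, s)` into
`E[q(Z) | a, s] · p(¬a, x) / p(a, x)`. As `W ⟂ Z` given `(a, s)`, the product of the two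
conditional expectations is `E[h(W) q(Z) | a, s]`, so
`E[Y^(a); ¬a, s] = E[h(W) q(Z); a, s] · p(¬a, x) / p(a, x)`; summing over `u` and `x` gives the
identity.
-/

section Stratification

variable {Ω : Type*} [Fintype Ω] (P : Ω → ℝ)

noncomputable def exOn (f : Ω → ℝ) (E : Ω → Prop) : ℝ :=
  ∑ ω, if E ω then P ω * f ω else 0

theorem ce_eq_exOn_div (f : Ω → ℝ) (E : Ω → Prop) : ce P f E = exOn P f E / pr P E := rfl

theorem pr_eq_exOn_one (E : Ω → Prop) : pr P E = exOn P (fun _ => 1) E := by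
  simp only [pr, exOn, mul_one]

theorem exOn_congr {f g : Ω → ℝ} {E F : Ω → Prop} (hEF : ∀ ω, E ω ↔ F ω)
    (hfg : ∀ ω, E ω → f ω = g ω) : exOn P f E = exOn P g F := by
  refine Finset.sum_congr rfl fun ω _ => ?_
  by_cases hE : E ω
  · rw [if_pos hE, if_pos ((hEF ω).1 hE), hfg ω hE]
  · rw [if_neg hE, if_neg (mt (hEF ω).2 hE)]

theorem pr_congr {E F : Ω → Prop} (hEF : ∀ ω, E ω ↔ F ω) : pr P E = pr P F := by
  simpa only [pr_eq_exOn_one] using exOn_congr P hEF fun _ _ => rfl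

theorem exOn_eq_sum_exOn {V : Type*} [Fintype V] (g : Ω → V) (f : Ω → ℝ) (E : Ω → Prop) :
    exOn P f E = ∑ v, exOn P f (fun ω => E ω ∧ g ω = v) := by
  unfold exOn
  rw [Finset.sum_comm]
  refine Finset.sum_congr rfl fun ω _ => ?_
  by_cases hE : E ω <;> simp [hE]

theorem pr_eq_sum_pr {V : Type*} [Fintype V] (g : Ω → V) (E : Ω → Prop) :
    pr P E = ∑ v, pr P (fun ω => E ω ∧ g ω = v) := by
  simp only [pr_eq_exOn_one]
  exact exOn_eq_sum_exOn P g _ E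

theorem pr_pos_of_forall_pr_and_pos {V : Type*} [Fintype V] [Nonempty V] (g : Ω → V)
    {E : Ω → Prop} (hpos : ∀ v, 0 < pr P (fun ω => E ω ∧ g ω = v)) : 0 < pr P E := by
  rw [pr_eq_sum_pr P g]
  exact Finset.sum_pos (fun v _ => hpos v) univ_nonempty

theorem exOn_comp {V : Type*} [Fintype V] (g : Ω → V) (φ : V → ℝ) (E : Ω → Prop) :
    exOn P (fun ω => φ (g ω)) E = ∑ v, φ v * pr P (fun ω => g ω = v ∧ E ω) := by
  simp only [exOn, pr, Finset.mul_sum]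
  rw [Finset.sum_comm]
  refine Finset.sum_congr rfl fun ω _ => ?_
  by_cases hE : E ω <;> simp [hE, mul_comm]

theorem exOn_comp₂ {V₁ V₂ : Type*} [Fintype V₁] [Fintype V₂] (g₁ : Ω → V₁) (g₂ : Ω → V₂)
    (φ : V₁ → V₂ → ℝ) (E : Ω → Prop) :
    exOn P (fun ω => φ (g₁ ω) (g₂ ω)) E =
      ∑ v₁, ∑ v₂, φ v₁ v₂ * pr P (fun ω => g₁ ω = v₁ ∧ g₂ ω = v₂ ∧ E ω) := by
  rw [exOn_comp P (fun ω => (g₁ ω, g₂ ω)) (fun v => φ v.1 v.2), Fintype.sum_prod_type]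
  simp only [Prod.mk.injEq, and_assoc]

theorem exOn_eq_sum_image (f : Ω → ℝ) (E : Ω → Prop) :
    exOn P f E = ∑ y ∈ univ.image f, y * pr P (fun ω => f ω = y ∧ E ω) := by
  simp only [exOn, pr, Finset.mul_sum]
  rw [Finset.sum_comm]
  refine Finset.sum_congr rfl fun ω _ => ?_
  by_cases hE : E ω <;> simp [hE, mul_comm]

theorem exOn_mul_pr_eq_of_indep {f : Ω → ℝ} {E F : Ω → Prop}
    (hind : ∀ y, pr P (fun ω => f ω = y ∧ E ω) * pr P F =
      pr P (fun ω => f ω = y ∧ F ω) * pr P E) :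
    exOn P f E * pr P F = exOn P f F * pr P E := by
  rw [exOn_eq_sum_image P f E, exOn_eq_sum_image P f F, Finset.sum_mul, Finset.sum_mul]
  exact Finset.sum_congr rfl fun y _ => by linear_combination y * hind y

theorem exOn_mul_pr_eq_of_condIndep {ι : Type*} {f : Ω → ℝ} {B : ι → Ω → Prop} {C : Ω → Prop}
    (hC : pr P C ≠ 0)
    (hind : ∀ i y, pr P (fun ω => f ω = y ∧ B i ω ∧ C ω) * pr P C =
      pr P (fun ω => f ω = y ∧ C ω) * pr P (fun ω => B i ω ∧ C ω)) (i j : ι) :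
    exOn P f (fun ω => B i ω ∧ C ω) * pr P (fun ω => B j ω ∧ C ω) =
      exOn P f (fun ω => B j ω ∧ C ω) * pr P (fun ω => B i ω ∧ C ω) := by
  have hi := exOn_mul_pr_eq_of_indep P (hind i)
  have hj := exOn_mul_pr_eq_of_indep P (hind j)
  refine mul_right_cancel₀ hC ?_
  linear_combination pr P (fun ω => B j ω ∧ C ω) * hi - pr P (fun ω => B i ω ∧ C ω) * hj

theorem exOn_mul_mul_pr_eq_of_indep {V₁ V₂ : Type*} [Fintype V₁] [Fintype V₂]
    (g₁ : Ω → V₁) (g₂ : Ω → V₂) (φ : V₁ → ℝ) (ψ : V₂ → ℝ) {E : Ω → Prop}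
    (hind : ∀ v₁ v₂, pr P (fun ω => g₁ ω = v₁ ∧ g₂ ω = v₂ ∧ E ω) * pr P E =
      pr P (fun ω => g₁ ω = v₁ ∧ E ω) * pr P (fun ω => g₂ ω = v₂ ∧ E ω)) :
    exOn P (fun ω => φ (g₁ ω) * ψ (g₂ ω)) E * pr P E =
      exOn P (fun ω => φ (g₁ ω)) E * exOn P (fun ω => ψ (g₂ ω)) E := by
  rw [exOn_comp₂ P g₁ g₂ (fun v₁ v₂ => φ v₁ * ψ v₂), exOn_comp P g₁, exOn_comp P g₂,
    Finset.sum_mul_sum, Finset.sum_mul]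
  refine Finset.sum_congr rfl fun v₁ _ => ?_
  rw [Finset.sum_mul]
  exact Finset.sum_congr rfl fun v₂ _ => by linear_combination φ v₁ * ψ v₂ * hind v₁ v₂

end Stratification

section TwoProxy

variable {Ω U X W Z : Type*} [Fintype Ω] (P : Ω → ℝ) (Uv : Ω → U) (Xv : Ω → X) (Wv : Ω → W)
  (Zv : Ω → Z) (Av : Ω → Bool) (Yv Ya : Ω → ℝ)

theorem exOn_potential_outcome_stratum [Fintype W] [Fintype Z] (a : Bool) (x : X) (u : U)
    (h : W → X → ℝ) (q : Z → X → ℝ)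
    (hYaA : ∀ (a' : Bool) (y : ℝ),
      pr P (fun ω => Ya ω = y ∧ Av ω = a' ∧ Xv ω = x ∧ Uv ω = u) *
          pr P (fun ω => Xv ω = x ∧ Uv ω = u) =
        pr P (fun ω => Ya ω = y ∧ Xv ω = x ∧ Uv ω = u) *
          pr P (fun ω => Av ω = a' ∧ Xv ω = x ∧ Uv ω = u))
    (hpos : ∀ a', 0 < pr P fun ω => Av ω = a' ∧ Xv ω = x ∧ Uv ω = u)
    (hposX : ∀ a', 0 < pr P fun ω => Av ω = a' ∧ Xv ω = x)
    (hcons : ∀ ω, Av ω = a → Yv ω = Ya ω)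
    (hbridgeh : ce P Yv (fun ω => Av ω = a ∧ Xv ω = x ∧ Uv ω = u) =
      ce P (fun ω => h (Wv ω) (Xv ω)) (fun ω => Av ω = a ∧ Xv ω = x ∧ Uv ω = u))
    (hbridgeq : ce P (fun ω => q (Zv ω) (Xv ω)) (fun ω => Av ω = a ∧ Xv ω = x ∧ Uv ω = u) =
      cpr P (fun ω => Uv ω = u) (fun ω => Av ω = !a ∧ Xv ω = x) /
        cpr P (fun ω => Uv ω = u) (fun ω => Av ω = a ∧ Xv ω = x))
    (hWZ : ∀ w z,
      pr P (fun ω => Wv ω = w ∧ Zv ω = z ∧ Av ω = a ∧ Xv ω = x ∧ Uv ω = u) *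
          pr P (fun ω => Av ω = a ∧ Xv ω = x ∧ Uv ω = u) =
        pr P (fun ω => Wv ω = w ∧ Av ω = a ∧ Xv ω = x ∧ Uv ω = u) *
          pr P (fun ω => Zv ω = z ∧ Av ω = a ∧ Xv ω = x ∧ Uv ω = u)) :
    exOn P Ya (fun ω => Av ω = !a ∧ Xv ω = x ∧ Uv ω = u) =
      exOn P (fun ω => h (Wv ω) x * q (Zv ω) x) (fun ω => Av ω = a ∧ Xv ω = x ∧ Uv ω = u) *
        (pr P (fun ω => Av ω = !a ∧ Xv ω = x) / pr P (fun ω => Av ω = a ∧ Xv ω = x)) := by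
  have hC : pr P (fun ω => Xv ω = x ∧ Uv ω = u) ≠ 0 :=
    (pr_pos_of_forall_pr_and_pos P Av fun b => by
      rw [pr_congr P fun _ => and_comm]; exact hpos b).ne'
  have ignorability :=
    exOn_mul_pr_eq_of_condIndep P (B := fun a' ω => Av ω = a') hC hYaA (!a) a
  have on_stratum {g₁ g₂ : Ω → ℝ} (hg : ∀ ω, Av ω = a → Xv ω = x → g₁ ω = g₂ ω) :
      exOn P g₁ (fun ω => Av ω = a ∧ Xv ω = x ∧ Uv ω = u) =
        exOn P g₂ (fun ω => Av ω = a ∧ Xv ω = x ∧ Uv ω = u) :=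
    exOn_congr P (fun _ => Iff.rfl) fun ω hω => hg ω hω.1 hω.2.1
  have outcome : exOn P Ya (fun ω => Av ω = a ∧ Xv ω = x ∧ Uv ω = u) =
      exOn P (fun ω => h (Wv ω) x) (fun ω => Av ω = a ∧ Xv ω = x ∧ Uv ω = u) := by
    rw [ce_eq_exOn_div, ce_eq_exOn_div, div_left_inj' (hpos a).ne'] at hbridgeh
    rw [on_stratum fun ω hA _ => (hcons ω hA).symm, hbridgeh]
    exact on_stratum fun ω _ hX => by rw [hX]
  have treatment :
      exOn P (fun ω => q (Zv ω) x) (fun ω => Av ω = a ∧ Xv ω = x ∧ Uv ω = u) *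
          pr P (fun ω => Av ω = !a ∧ Xv ω = x) =
        pr P (fun ω => Av ω = !a ∧ Xv ω = x ∧ Uv ω = u) *
          pr P (fun ω => Av ω = a ∧ Xv ω = x) := by
    rw [ce_eq_exOn_div, on_stratum fun ω _ hX => by rw [hX]] at hbridgeq
    simp only [cpr, pr_congr P fun ω => (and_comm : Uv ω = u ∧ _ ↔ _), and_assoc] at hbridgeq
    have hS : pr P (fun ω => Av ω = a ∧ Xv ω = x ∧ Uv ω = u) ≠ 0 := (hpos a).ne'
    have hT : pr P (fun ω => Av ω = a ∧ Xv ω = x) ≠ 0 := (hposX a).ne'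
    have hT' : pr P (fun ω => Av ω = !a ∧ Xv ω = x) ≠ 0 := (hposX (!a)).ne'
    field_simp at hbridgeq
    linear_combination hbridgeq
  have proxies := exOn_mul_mul_pr_eq_of_indep P Wv Zv (h · x) (q · x) hWZ
  rw [mul_div_assoc', eq_div_iff (hposX a).ne']
  refine mul_right_cancel₀ (hpos a).ne' ?_
  set Pa := pr P (fun ω => Av ω = a ∧ Xv ω = x)
  set Nh := exOn P (fun ω => h (Wv ω) x) (fun ω => Av ω = a ∧ Xv ω = x ∧ Uv ω = u)
  linear_combination Pa * ignorability +
    Pa * pr P (fun ω => Av ω = !a ∧ Xv ω = x ∧ Uv ω = u) * outcome - Nh * treatment -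
    pr P (fun ω => Av ω = !a ∧ Xv ω = x) * proxies

end TwoProxy

theorem two_proxy_identity_general {Ω U X W Z : Type*} [Fintype Ω] [Fintype U] [Fintype X]
    [Fintype W] [Fintype Z]
    (P : Ω → ℝ)
    (Uv : Ω → U) (Xv : Ω → X) (Wv : Ω → W) (Zv : Ω → Z) (Av : Ω → Bool) (Yv : Ω → ℝ)
    (a : Bool) (Ya : Ω → ℝ)
    -- (i) Y^(a) ⟂ A | (X,U)
    (hYaA : ∀ (y : ℝ) (a' : Bool) (x : X) (u : U),
      pr P (fun ω => Ya ω = y ∧ Av ω = a' ∧ Xv ω = x ∧ Uv ω = u) *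
          pr P (fun ω => Xv ω = x ∧ Uv ω = u) =
        pr P (fun ω => Ya ω = y ∧ Xv ω = x ∧ Uv ω = u) *
          pr P (fun ω => Av ω = a' ∧ Xv ω = x ∧ Uv ω = u))
    -- positivity
    (hpos : ∀ (a' : Bool) (x : X) (u : U),
      0 < pr P fun ω => Av ω = a' ∧ Xv ω = x ∧ Uv ω = u)
    -- consistency
    (hcons : ∀ ω, Av ω = a → Yv ω = Ya ω)
    -- (ii) outcome bridge function h
    (h : W → Bool → X → ℝ)
    (hbridgeh : ∀ (a' : Bool) (x : X) (u : U),
      ce P Yv (fun ω => Av ω = a' ∧ Xv ω = x ∧ Uv ω = u) =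
        ce P (fun ω => h (Wv ω) a' (Xv ω)) (fun ω => Av ω = a' ∧ Xv ω = x ∧ Uv ω = u))
    -- (iii) treatment bridge function q
    (q : Z → Bool → X → ℝ)
    (hbridgeq : ∀ (a' : Bool) (x : X) (u : U),
      ce P (fun ω => q (Zv ω) a' (Xv ω)) (fun ω => Av ω = a' ∧ Xv ω = x ∧ Uv ω = u) =
        cpr P (fun ω => Uv ω = u) (fun ω => Av ω = !a' ∧ Xv ω = x) /
          cpr P (fun ω => Uv ω = u) (fun ω => Av ω = a' ∧ Xv ω = x))
    -- (iv) W ⟂ Z | (A, X, U)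
    (hWZ : ∀ (w : W) (z : Z) (a' : Bool) (x : X) (u : U),
      pr P (fun ω => Wv ω = w ∧ Zv ω = z ∧ Av ω = a' ∧ Xv ω = x ∧ Uv ω = u) *
          pr P (fun ω => Av ω = a' ∧ Xv ω = x ∧ Uv ω = u) =
        pr P (fun ω => Wv ω = w ∧ Av ω = a' ∧ Xv ω = x ∧ Uv ω = u) *
          pr P (fun ω => Zv ω = z ∧ Av ω = a' ∧ Xv ω = x ∧ Uv ω = u)) :
    ce P Ya (fun ω => Av ω = !a) =
      ∑ w : W, ∑ z : Z, ∑ x : X,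
        h w a x * q z a x *
          cpr P (fun ω => Wv ω = w ∧ Zv ω = z) (fun ω => Av ω = a ∧ Xv ω = x) *
          cpr P (fun ω => Xv ω = x) (fun ω => Av ω = !a) := by
  have stratum (x : X) (u : U) := by
    have : Nonempty U := ⟨u⟩
    exact exOn_potential_outcome_stratum P Uv Xv Wv Zv Av Yv Ya a x u (h · a ·) (q · a ·)
      (fun a' y => hYaA y a' x u) (fun a' => hpos a' x u)
      (fun a' => pr_pos_of_forall_pr_and_pos P Uv fun u' => by
        simpa only [and_assoc] using hpos a' x u')
      hcons (hbridgeh a x u) (hbridgeq a x u) (fun w z => hWZ w z a x u)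
  have arm (x : X) : exOn P Ya (fun ω => Av ω = !a ∧ Xv ω = x) =
      ∑ w, ∑ z, h w a x * q z a x * pr P (fun ω => Wv ω = w ∧ Zv ω = z ∧ Av ω = a ∧ Xv ω = x) *
        (pr P (fun ω => Av ω = !a ∧ Xv ω = x) / pr P (fun ω => Av ω = a ∧ Xv ω = x)) := by
    have split := exOn_eq_sum_exOn P Uv (fun ω => h (Wv ω) a x * q (Zv ω) a x)
      (fun ω => Av ω = a ∧ Xv ω = x)
    simp only [and_assoc] at split
    rw [exOn_eq_sum_exOn P Uv]
    simp only [and_assoc, stratum]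
    rw [← Finset.sum_mul, ← split, exOn_comp₂ P Wv Zv (fun w z => h w a x * q z a x),
      Finset.sum_mul]
    simp only [Finset.sum_mul]
  rw [ce_eq_exOn_div, exOn_eq_sum_exOn P Xv, Finset.sum_div]
  simp only [arm, Finset.sum_div]
  rw [Finset.sum_comm]
  refine Finset.sum_congr rfl fun w _ => ?_
  rw [Finset.sum_comm]
  refine Finset.sum_congr rfl fun z _ => Finset.sum_congr rfl fun x _ => ?_
  rw [cpr, cpr, pr_congr P fun ω => (and_comm : Xv ω = x ∧ _ ↔ _)]
  simp only [and_assoc]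
  ring

/-- Key identity of Theorem 3 (two invalid proxies):
`E[Y^(a) | A=1−a] = ∑_{w,z,x} h(w,a,x)·q(z,a,x)·p(w,z | A=a,x)·p(x | A=1−a)`. -/
theorem two_proxy_identity {Ω U X W Z : Type*} [Fintype Ω] [Fintype U] [Fintype X]
    [Fintype W] [Fintype Z]
    (P : Ω → ℝ) (hP : ∀ ω, 0 ≤ P ω) (hP1 : ∑ ω, P ω = 1)
    (Uv : Ω → U) (Xv : Ω → X) (Wv : Ω → W) (Zv : Ω → Z) (Av : Ω → Bool) (Yv : Ω → ℝ)
    (a : Bool) (Ya : Ω → ℝ)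
    (hY : ∀ ω, 0 ≤ Yv ω)
    -- (i) Y^(a) ⟂ A | (X,U)
    (hYaA : ∀ (y : ℝ) (a' : Bool) (x : X) (u : U),
      pr P (fun ω => Ya ω = y ∧ Av ω = a' ∧ Xv ω = x ∧ Uv ω = u) *
          pr P (fun ω => Xv ω = x ∧ Uv ω = u) =
        pr P (fun ω => Ya ω = y ∧ Xv ω = x ∧ Uv ω = u) *
          pr P (fun ω => Av ω = a' ∧ Xv ω = x ∧ Uv ω = u))
    -- positivity
    (hpos : ∀ (a' : Bool) (x : X) (u : U),
      0 < pr P fun ω => Av ω = a' ∧ Xv ω = x ∧ Uv ω = u)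
    -- consistency
    (hcons : ∀ ω, Av ω = a → Yv ω = Ya ω)
    -- (ii) outcome bridge function h
    (h : W → Bool → X → ℝ) (hh : ∀ w a' x, 0 ≤ h w a' x)
    (hbridgeh : ∀ (a' : Bool) (x : X) (u : U),
      ce P Yv (fun ω => Av ω = a' ∧ Xv ω = x ∧ Uv ω = u) =
        ce P (fun ω => h (Wv ω) a' (Xv ω)) (fun ω => Av ω = a' ∧ Xv ω = x ∧ Uv ω = u))
    -- (iii) treatment bridge function q
    (q : Z → Bool → X → ℝ) (hq : ∀ z a' x, 0 ≤ q z a' x)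
    (hbridgeq : ∀ (a' : Bool) (x : X) (u : U),
      ce P (fun ω => q (Zv ω) a' (Xv ω)) (fun ω => Av ω = a' ∧ Xv ω = x ∧ Uv ω = u) =
        cpr P (fun ω => Uv ω = u) (fun ω => Av ω = !a' ∧ Xv ω = x) /
          cpr P (fun ω => Uv ω = u) (fun ω => Av ω = a' ∧ Xv ω = x))
    -- (iv) W ⟂ Z | (A, X, U)
    (hWZ : ∀ (w : W) (z : Z) (a' : Bool) (x : X) (u : U),
      pr P (fun ω => Wv ω = w ∧ Zv ω = z ∧ Av ω = a' ∧ Xv ω = x ∧ Uv ω = u) *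
          pr P (fun ω => Av ω = a' ∧ Xv ω = x ∧ Uv ω = u) =
        pr P (fun ω => Wv ω = w ∧ Av ω = a' ∧ Xv ω = x ∧ Uv ω = u) *
          pr P (fun ω => Zv ω = z ∧ Av ω = a' ∧ Xv ω = x ∧ Uv ω = u)) :
    ce P Ya (fun ω => Av ω = !a) =
      ∑ w : W, ∑ z : Z, ∑ x : X,
        h w a x * q z a x *
          cpr P (fun ω => Wv ω = w ∧ Zv ω = z) (fun ω => Av ω = a ∧ Xv ω = x) *
          cpr P (fun ω => Xv ω = x) (fun ω => Av ω = !a) :=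
  two_proxy_identity_general P Uv Xv Wv Zv Av Yv a Ya hYaA hpos hcons h hbridgeh q hbridgeq hWZ
end

section
/- In a finite probability space with variables (X, M, W, A, Y), A binary, Y ≥ 0, assume: W ⟂ A | (X, M); there exists nonnegative h with E[Y | A=1, X, M] = E[h(W, X) | X, M] a.s.; and positivity p(m | a, x) > 0, p(a | x) > 0 for all m, a, x. Then the mediation functional θ := ∑_{x,m} E[Y | A=1, X=x, M=m] · p(m | A=0, x) · p(x) satisfies E[min_w (p(w | A=0, X)/p(w | A=1, X)) · E[Y | A=1, X]] ≤ θ ≤ E[max_w (p(w | A=0, X)/p(w | A=1, X)) · E[Y | A=1, X]]. -/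
open Finset Real
open scoped Classical

/-!
For each arm `a` and stratum `x`, the bridge equation and `W ⟂ A | (X, M)` rewrite
`∑ₘ E[Y | A=1, x, m] p(m | a, x)` as `∑_w h(w, x) p(w | a, x)`. For `a = 1` this is
`E[Y | A=1, x]` by the tower property, for `a = 0` it is the `x`-slice of `θ`. Since `h ≥ 0`,
writing `p(w | 0, x) = (p(w | 0, x) / p(w | 1, x)) p(w | 1, x)` and bounding the ratio by its
minimum and maximum over `w` gives the two bounds.
-/

section FiniteProbability

variable {Ω : Type*} [Fintype Ω] (P : Ω → ℝ)

lemma pr_mono (hP : ∀ ω, 0 ≤ P ω) {E F : Ω → Prop} (hEF : ∀ ω, E ω → F ω) :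
    pr P E ≤ pr P F :=
  sum_le_sum fun ω _ => by
    by_cases hE : E ω
    · simp [hE, hEF ω hE]
    · by_cases hF : F ω <;> simp [hE, hF, hP ω]

lemma pr_nonneg (hP : ∀ ω, 0 ≤ P ω) (E : Ω → Prop) : 0 ≤ pr P E :=
  sum_nonneg fun ω _ => by split_ifs <;> simp [hP ω]

lemma pr_eq_sum_pr_and {ι : Type*} [Fintype ι] (E : Ω → Prop) (g : Ω → ι) :
    pr P E = ∑ i, pr P (fun ω => E ω ∧ g ω = i) := by
  unfold pr
  rw [sum_comm]
  refine sum_congr rfl fun ω _ => ?_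
  by_cases hE : E ω <;> simp [hE]

lemma cpr_pos (hP : ∀ ω, 0 ≤ P ω) {E F : Ω → Prop} (h : 0 < pr P (fun ω => E ω ∧ F ω)) :
    0 < cpr P E F :=
  div_pos h (h.trans_le (pr_mono P hP fun _ => And.right))

lemma ce_congr {f g : Ω → ℝ} {E : Ω → Prop} (hfg : ∀ ω, E ω → f ω = g ω) :
    ce P f E = ce P g E := by
  unfold ce
  congr 1
  refine sum_congr rfl fun ω _ => ?_
  by_cases hE : E ω <;> simp [hE, hfg]

lemma cpr_eq_ce_indicator (E F : Ω → Prop) : cpr P E F = ce P ({ω | E ω}.indicator 1) F := by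
  unfold cpr ce pr
  congr 1
  refine sum_congr rfl fun ω _ => ?_
  by_cases hE : E ω <;> by_cases hF : F ω <;> simp [hE, hF]

lemma ce_comp_eq_sum_cpr {V : Type*} [Fintype V] (g : Ω → V) (f : V → ℝ) (E : Ω → Prop) :
    ce P (fun ω => f (g ω)) E = ∑ v, f v * cpr P (fun ω => g ω = v) E := by
  unfold ce cpr pr
  simp only [← mul_div_assoc, ← sum_div, mul_sum]
  rw [sum_comm]
  congr 1
  refine sum_congr rfl fun ω _ => ?_
  by_cases hE : E ω <;> simp [hE, mul_comm]

lemma cpr_and_eq_cpr_of_indep {E B C : Ω → Prop} (hC : pr P C ≠ 0)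
    (hBC : pr P (fun ω => B ω ∧ C ω) ≠ 0)
    (hindep : pr P (fun ω => E ω ∧ B ω ∧ C ω) * pr P C =
      pr P (fun ω => E ω ∧ C ω) * pr P (fun ω => B ω ∧ C ω)) :
    cpr P E (fun ω => B ω ∧ C ω) = cpr P E C := by
  rw [cpr, cpr, div_eq_div_iff hBC hC, hindep, mul_comm]

section Partition

variable {ι : Type*} [Fintype ι] {B : Ω → Prop} {g : Ω → ι}

lemma ce_eq_sum_ce_mul_cpr (hB : ∀ i, pr P (fun ω => B ω ∧ g ω = i) ≠ 0) (f : Ω → ℝ) :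
    ce P f B = ∑ i, ce P f (fun ω => B ω ∧ g ω = i) * cpr P (fun ω => g ω = i) B := by
  have hcomm : ∀ i, pr P (fun ω => g ω = i ∧ B ω) = pr P (fun ω => B ω ∧ g ω = i) :=
    fun i => congrArg (pr P) (funext fun ω => propext and_comm)
  simp only [cpr, hcomm, ce, div_mul_div_cancel₀ (hB _), ← sum_div]
  congr 1
  exact pr_eq_sum_pr_and (fun ω => P ω * f ω) B g

lemma cpr_eq_sum_cpr_mul_cpr (hB : ∀ i, pr P (fun ω => B ω ∧ g ω = i) ≠ 0) (E : Ω → Prop) :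
    cpr P E B = ∑ i, cpr P E (fun ω => B ω ∧ g ω = i) * cpr P (fun ω => g ω = i) B := by
  simp only [cpr_eq_ce_indicator P E]
  exact ce_eq_sum_ce_mul_cpr P hB _

end Partition

end FiniteProbability

lemma inf'_div_mul_sum_le {ι 𝕜 : Type*} [Field 𝕜] [LinearOrder 𝕜] [IsStrictOrderedRing 𝕜]
    {s : Finset ι} (hs : s.Nonempty) {c p q : ι → 𝕜} (hc : ∀ i ∈ s, 0 ≤ c i)
    (hq : ∀ i ∈ s, 0 < q i) :
    s.inf' hs (fun i => p i / q i) * ∑ i ∈ s, c i * q i ≤ ∑ i ∈ s, c i * p i := by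
  rw [mul_sum]
  refine sum_le_sum fun i hi => ?_
  calc s.inf' hs (fun i => p i / q i) * (c i * q i) ≤ p i / q i * (c i * q i) :=
        mul_le_mul_of_nonneg_right (inf'_le _ hi) (mul_nonneg (hc i hi) (hq i hi).le)
    _ = c i * p i := by field_simp [(hq i hi).ne']

lemma sum_mul_le_sup'_div_mul_sum {ι 𝕜 : Type*} [Field 𝕜] [LinearOrder 𝕜] [IsStrictOrderedRing 𝕜]
    {s : Finset ι} (hs : s.Nonempty) {c p q : ι → 𝕜} (hc : ∀ i ∈ s, 0 ≤ c i)
    (hq : ∀ i ∈ s, 0 < q i) :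
    ∑ i ∈ s, c i * p i ≤ s.sup' hs (fun i => p i / q i) * ∑ i ∈ s, c i * q i := by
  rw [mul_sum]
  refine sum_le_sum fun i hi => ?_
  calc c i * p i = p i / q i * (c i * q i) := by field_simp [(hq i hi).ne']
    _ ≤ s.sup' hs (fun i => p i / q i) * (c i * q i) :=
        mul_le_mul_of_nonneg_right (le_sup' (fun i => p i / q i) hi)
          (mul_nonneg (hc i hi) (hq i hi).le)

section Mediation

variable {Ω X M W : Type*} [Fintype Ω] [Fintype M] [Fintype W]
  {P : Ω → ℝ} {Xv : Ω → X} {Mv : Ω → M} {Wv : Ω → W} {Av : Ω → Bool} {Yv : Ω → ℝ}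
  {h : W → X → ℝ}

/-- `W ⟂ A | (X, M)` lets the bridge function's weights `p(w | x, m)` be read as
`p(w | a, x, m)` for either arm `a`, which then average over `p(m | a, x)` to `p(w | a, x)`. -/
theorem sum_ce_mul_cpr_eq_sum_bridge_mul_cpr (hP : ∀ ω, 0 ≤ P ω)
    (hWA : ∀ (w : W) (a' : Bool) (x : X) (m : M),
      pr P (fun ω => Wv ω = w ∧ Av ω = a' ∧ Xv ω = x ∧ Mv ω = m) *
          pr P (fun ω => Xv ω = x ∧ Mv ω = m) =
        pr P (fun ω => Wv ω = w ∧ Xv ω = x ∧ Mv ω = m) *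
          pr P (fun ω => Av ω = a' ∧ Xv ω = x ∧ Mv ω = m))
    (hbridge : ∀ (x : X) (m : M),
      ce P Yv (fun ω => Av ω = true ∧ Xv ω = x ∧ Mv ω = m) =
        ce P (fun ω => h (Wv ω) (Xv ω)) (fun ω => Xv ω = x ∧ Mv ω = m))
    (hpos : ∀ (a' : Bool) (x : X) (m : M),
      0 < pr P fun ω => Av ω = a' ∧ Xv ω = x ∧ Mv ω = m)
    (a : Bool) (x : X) :
    ∑ m, ce P Yv (fun ω => Av ω = true ∧ Xv ω = x ∧ Mv ω = m) *
        cpr P (fun ω => Mv ω = m) (fun ω => Av ω = a ∧ Xv ω = x) =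
      ∑ w, h w x * cpr P (fun ω => Wv ω = w) (fun ω => Av ω = a ∧ Xv ω = x) := by
  have hcell : ∀ m, pr P (fun ω => (Av ω = a ∧ Xv ω = x) ∧ Mv ω = m) ≠ 0 := fun m => by
    simpa only [and_assoc] using (hpos a x m).ne'
  have hce : ∀ m, ce P Yv (fun ω => Av ω = true ∧ Xv ω = x ∧ Mv ω = m) =
      ∑ w, h w x * cpr P (fun ω => Wv ω = w) (fun ω => (Av ω = a ∧ Xv ω = x) ∧ Mv ω = m) := by
    intro m
    have hXM : pr P (fun ω => Xv ω = x ∧ Mv ω = m) ≠ 0 :=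
      ((hpos a x m).trans_le (pr_mono P hP fun _ => And.right)).ne'
    rw [hbridge, ce_congr P (g := fun ω => h (Wv ω) x) (by rintro ω ⟨rfl, -⟩; rfl),
      ce_comp_eq_sum_cpr P Wv (h · x)]
    refine sum_congr rfl fun w _ => congrArg (h w x * ·) ?_
    simp only [and_assoc]
    exact (cpr_and_eq_cpr_of_indep P hXM (hpos a x m).ne' (hWA w a x m)).symm
  simp only [hce, sum_mul, mul_assoc]
  rw [sum_comm]
  simp only [← mul_sum, ← cpr_eq_sum_cpr_mul_cpr P hcell]

end Mediation

theorem mediation_bounds_general {Ω X M W : Type*} [Fintype Ω] [Fintype X] [Fintype M]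
    [Fintype W] [Nonempty W]
    (P : Ω → ℝ) (hP : ∀ ω, 0 ≤ P ω)
    (Xv : Ω → X) (Mv : Ω → M) (Wv : Ω → W) (Av : Ω → Bool) (Yv : Ω → ℝ)
    -- W ⟂ A | (X, M)
    (hWA : ∀ (w : W) (a' : Bool) (x : X) (m : M),
      pr P (fun ω => Wv ω = w ∧ Av ω = a' ∧ Xv ω = x ∧ Mv ω = m) *
          pr P (fun ω => Xv ω = x ∧ Mv ω = m) =
        pr P (fun ω => Wv ω = w ∧ Xv ω = x ∧ Mv ω = m) *
          pr P (fun ω => Av ω = a' ∧ Xv ω = x ∧ Mv ω = m))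
    -- mediation bridge function h
    (h : W → X → ℝ) (hh : ∀ w x, 0 ≤ h w x)
    (hbridge : ∀ (x : X) (m : M),
      ce P Yv (fun ω => Av ω = true ∧ Xv ω = x ∧ Mv ω = m) =
        ce P (fun ω => h (Wv ω) (Xv ω)) (fun ω => Xv ω = x ∧ Mv ω = m))
    -- positivity
    (hpos : ∀ (a' : Bool) (x : X) (m : M),
      0 < pr P fun ω => Av ω = a' ∧ Xv ω = x ∧ Mv ω = m)
    (hposW : ∀ (w : W) (a' : Bool) (x : X),
      0 < pr P fun ω => Wv ω = w ∧ Av ω = a' ∧ Xv ω = x) :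
    (∑ x : X,
        (univ.inf' univ_nonempty fun w : W =>
            cpr P (fun ω => Wv ω = w) (fun ω => Av ω = false ∧ Xv ω = x) /
              cpr P (fun ω => Wv ω = w) (fun ω => Av ω = true ∧ Xv ω = x)) *
          ce P Yv (fun ω => Av ω = true ∧ Xv ω = x) * pr P (fun ω => Xv ω = x)) ≤
      (∑ x : X, ∑ m : M,
        ce P Yv (fun ω => Av ω = true ∧ Xv ω = x ∧ Mv ω = m) *
          cpr P (fun ω => Mv ω = m) (fun ω => Av ω = false ∧ Xv ω = x) *
          pr P (fun ω => Xv ω = x)) ∧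
    (∑ x : X, ∑ m : M,
        ce P Yv (fun ω => Av ω = true ∧ Xv ω = x ∧ Mv ω = m) *
          cpr P (fun ω => Mv ω = m) (fun ω => Av ω = false ∧ Xv ω = x) *
          pr P (fun ω => Xv ω = x)) ≤
      ∑ x : X,
        (univ.sup' univ_nonempty fun w : W =>
            cpr P (fun ω => Wv ω = w) (fun ω => Av ω = false ∧ Xv ω = x) /
              cpr P (fun ω => Wv ω = w) (fun ω => Av ω = true ∧ Xv ω = x)) *
          ce P Yv (fun ω => Av ω = true ∧ Xv ω = x) * pr P (fun ω => Xv ω = x) := by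
  have hθ := sum_ce_mul_cpr_eq_sum_bridge_mul_cpr hP hWA hbridge hpos
  have hq : ∀ x, ∀ w ∈ univ, 0 < cpr P (fun ω => Wv ω = w) (fun ω => Av ω = true ∧ Xv ω = x) :=
    fun x w _ => cpr_pos P hP (hposW w true x)
  have hEY : ∀ x, ce P Yv (fun ω => Av ω = true ∧ Xv ω = x) =
      ∑ w, h w x * cpr P (fun ω => Wv ω = w) (fun ω => Av ω = true ∧ Xv ω = x) := fun x => by
    rw [← hθ, ce_eq_sum_ce_mul_cpr P (g := Mv) fun m => by
      simpa only [and_assoc] using (hpos true x m).ne']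
    simp only [and_assoc]
  simp only [← sum_mul, hθ, hEY]
  constructor <;> refine sum_le_sum fun x _ => mul_le_mul_of_nonneg_right ?_ (pr_nonneg P hP _)
  · exact inf'_div_mul_sum_le _ (fun w _ => hh w x) (hq x)
  · exact sum_mul_le_sup'_div_mul_sum _ (fun w _ => hh w x) (hq x)

/-- Theorem 4: bounds on the mediation functional
`θ = ∑_{x,m} E[Y | A=1, x, m]·p(m | A=0, x)·p(x)` (equal to `E[Y^(1,M^(0))]`). -/
theorem mediation_bounds {Ω X M W : Type*} [Fintype Ω] [Fintype X] [Fintype M]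
    [Fintype W] [Nonempty W]
    (P : Ω → ℝ) (hP : ∀ ω, 0 ≤ P ω) (hP1 : ∑ ω, P ω = 1)
    (Xv : Ω → X) (Mv : Ω → M) (Wv : Ω → W) (Av : Ω → Bool) (Yv : Ω → ℝ)
    (hY : ∀ ω, 0 ≤ Yv ω)
    -- W ⟂ A | (X, M)
    (hWA : ∀ (w : W) (a' : Bool) (x : X) (m : M),
      pr P (fun ω => Wv ω = w ∧ Av ω = a' ∧ Xv ω = x ∧ Mv ω = m) *
          pr P (fun ω => Xv ω = x ∧ Mv ω = m) =
        pr P (fun ω => Wv ω = w ∧ Xv ω = x ∧ Mv ω = m) *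
          pr P (fun ω => Av ω = a' ∧ Xv ω = x ∧ Mv ω = m))
    -- mediation bridge function h
    (h : W → X → ℝ) (hh : ∀ w x, 0 ≤ h w x)
    (hbridge : ∀ (x : X) (m : M),
      ce P Yv (fun ω => Av ω = true ∧ Xv ω = x ∧ Mv ω = m) =
        ce P (fun ω => h (Wv ω) (Xv ω)) (fun ω => Xv ω = x ∧ Mv ω = m))
    -- positivity
    (hpos : ∀ (a' : Bool) (x : X) (m : M),
      0 < pr P fun ω => Av ω = a' ∧ Xv ω = x ∧ Mv ω = m)
    (hposW : ∀ (w : W) (a' : Bool) (x : X),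
      0 < pr P fun ω => Wv ω = w ∧ Av ω = a' ∧ Xv ω = x) :
    (∑ x : X,
        (univ.inf' univ_nonempty fun w : W =>
            cpr P (fun ω => Wv ω = w) (fun ω => Av ω = false ∧ Xv ω = x) /
              cpr P (fun ω => Wv ω = w) (fun ω => Av ω = true ∧ Xv ω = x)) *
          ce P Yv (fun ω => Av ω = true ∧ Xv ω = x) * pr P (fun ω => Xv ω = x)) ≤
      (∑ x : X, ∑ m : M,
        ce P Yv (fun ω => Av ω = true ∧ Xv ω = x ∧ Mv ω = m) *
          cpr P (fun ω => Mv ω = m) (fun ω => Av ω = false ∧ Xv ω = x) *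
          pr P (fun ω => Xv ω = x)) ∧
    (∑ x : X, ∑ m : M,
        ce P Yv (fun ω => Av ω = true ∧ Xv ω = x ∧ Mv ω = m) *
          cpr P (fun ω => Mv ω = m) (fun ω => Av ω = false ∧ Xv ω = x) *
          pr P (fun ω => Xv ω = x)) ≤
      ∑ x : X,
        (univ.sup' univ_nonempty fun w : W =>
            cpr P (fun ω => Wv ω = w) (fun ω => Av ω = false ∧ Xv ω = x) /
              cpr P (fun ω => Wv ω = w) (fun ω => Av ω = true ∧ Xv ω = x)) *
          ce P Yv (fun ω => Av ω = true ∧ Xv ω = x) * pr P (fun ω => Xv ω = x) :=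
  mediation_bounds_general P hP Xv Mv Wv Av Yv hWA h hh hbridge hpos hposW
end

section
/- Let x₁,…,xₙ be real numbers, α > 0, c a real upper bound with xᵢ ≤ c. Then LSE({c, LSE({x₁,…,xₙ}; α)}; −α) + log(2)/α ≥ min{c, max_i xᵢ} and LSE({c', LSE({x₁,…,xₙ}; −α)}; α) − log(2)/α ≤ max{c', min_i xᵢ} for any real c'. In particular, the smoothed quantities ψ_U(α) := LSE({c, M(α)}; −α) + log(2)/α with M(α) = LSE({x₁,…,xₙ}; α) and ψ_L(α) := LSE({c', m(α)}; α) − log(2)/α with m(α) = LSE({x₁,…,xₙ}; −α) satisfy ψ_L(α) ≤ max{c', min_i xᵢ} ≤ min{c, max_i xᵢ} ≤ ψ_U(α) whenever max{c', min_i xᵢ} ≤ min{c, max_i xᵢ}. -/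
open Finset Real

/-- LogSumExp of a finite family. -/
noncomputable def lse {ι : Type*} (s : Finset ι) (f : ι → ℝ) (α : ℝ) : ℝ :=
  (1 / α) * Real.log (∑ i ∈ s, Real.exp (α * f i))

/-- LogSumExp of two real numbers. -/
noncomputable def lse2 (a b α : ℝ) : ℝ :=
  (1 / α) * Real.log (Real.exp (α * a) + Real.exp (α * b))

lemma sup'_le_lse {ι : Type*} (s : Finset ι) (hs : s.Nonempty) (f : ι → ℝ)
    {α : ℝ} (hα : 0 < α) : s.sup' hs f ≤ lse s f α := by
  obtain ⟨j, hj, hfj⟩ := Finset.exists_mem_eq_sup' hs f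
  have hsum : 0 < ∑ i ∈ s, Real.exp (α * f i) :=
    Finset.sum_pos (fun i _ => Real.exp_pos _) hs
  have h1 : Real.exp (α * f j) ≤ ∑ i ∈ s, Real.exp (α * f i) :=
    Finset.single_le_sum (f := fun i => Real.exp (α * f i)) (fun i _ => (Real.exp_pos _).le) hj
  have h2 : α * f j ≤ Real.log (∑ i ∈ s, Real.exp (α * f i)) :=
    (Real.le_log_iff_exp_le hsum).mpr h1
  rw [hfj, lse]
  calc f j = (1 / α) * (α * f j) := by field_simp
    _ ≤ (1 / α) * Real.log (∑ i ∈ s, Real.exp (α * f i)) := by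
        apply mul_le_mul_of_nonneg_left h2; positivity

lemma lse_le_inf' {ι : Type*} (s : Finset ι) (hs : s.Nonempty) (f : ι → ℝ)
    {α : ℝ} (hα : 0 < α) : lse s f (-α) ≤ s.inf' hs f := by
  obtain ⟨j, hj, hfj⟩ := Finset.exists_mem_eq_inf' hs f
  have hsum : 0 < ∑ i ∈ s, Real.exp (-α * f i) :=
    Finset.sum_pos (fun i _ => Real.exp_pos _) hs
  have h1 : Real.exp (-α * f j) ≤ ∑ i ∈ s, Real.exp (-α * f i) :=
    Finset.single_le_sum (f := fun i => Real.exp (-α * f i)) (fun i _ => (Real.exp_pos _).le) hj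
  have h2 : -α * f j ≤ Real.log (∑ i ∈ s, Real.exp (-α * f i)) :=
    (Real.le_log_iff_exp_le hsum).mpr h1
  rw [hfj, lse]
  have hαne : α ≠ 0 := ne_of_gt hα
  rw [div_mul_eq_mul_div, one_mul, div_le_iff_of_neg (by linarith : (-α) < 0)]
  linarith [h2]

lemma min_sub_le_lse2 (a b : ℝ) {α : ℝ} (hα : 0 < α) :
    min a b - Real.log 2 / α ≤ lse2 a b (-α) := by
  have h1 : Real.exp (-α * a) + Real.exp (-α * b) ≤ 2 * Real.exp (-α * min a b) := by
    have ha : Real.exp (-α * a) ≤ Real.exp (-α * min a b) :=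
      Real.exp_le_exp.mpr (by nlinarith [min_le_left a b])
    have hb : Real.exp (-α * b) ≤ Real.exp (-α * min a b) :=
      Real.exp_le_exp.mpr (by nlinarith [min_le_right a b])
    linarith
  have hpos : 0 < Real.exp (-α * a) + Real.exp (-α * b) := by positivity
  have h2 : Real.log (Real.exp (-α * a) + Real.exp (-α * b)) ≤
      Real.log 2 + (-α * min a b) := by
    calc Real.log (Real.exp (-α * a) + Real.exp (-α * b))
        ≤ Real.log (2 * Real.exp (-α * min a b)) :=
          Real.log_le_log hpos h1
      _ = Real.log 2 + (-α * min a b) := by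
          rw [Real.log_mul (by norm_num) (Real.exp_ne_zero _), Real.log_exp]
  rw [lse2, div_mul_eq_mul_div, one_mul]
  rw [le_div_iff_of_neg (by linarith : (-α) < 0)]
  have heq : (min a b - Real.log 2 / α) * (-α) = Real.log 2 + (-α * min a b) := by
    field_simp; ring
  linarith [h2, heq.le, heq.ge]

lemma lse2_le_max_add (a b : ℝ) {α : ℝ} (hα : 0 < α) :
    lse2 a b α ≤ max a b + Real.log 2 / α := by
  have h1 : Real.exp (α * a) + Real.exp (α * b) ≤ 2 * Real.exp (α * max a b) := by
    have ha : Real.exp (α * a) ≤ Real.exp (α * max a b) :=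
      Real.exp_le_exp.mpr (by nlinarith [le_max_left a b])
    have hb : Real.exp (α * b) ≤ Real.exp (α * max a b) :=
      Real.exp_le_exp.mpr (by nlinarith [le_max_right a b])
    linarith
  have hpos : 0 < Real.exp (α * a) + Real.exp (α * b) := by positivity
  have h2 : Real.log (Real.exp (α * a) + Real.exp (α * b)) ≤
      Real.log 2 + α * max a b := by
    calc Real.log (Real.exp (α * a) + Real.exp (α * b))
        ≤ Real.log (2 * Real.exp (α * max a b)) := Real.log_le_log hpos h1
      _ = Real.log 2 + α * max a b := by
          rw [Real.log_mul (by norm_num) (Real.exp_ne_zero _), Real.log_exp]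
  rw [lse2, div_mul_eq_mul_div, one_mul, div_le_iff₀ hα]
  have heq : (max a b + Real.log 2 / α) * α = Real.log 2 + α * max a b := by
    field_simp; ring
  linarith [h2, heq.le, heq.ge]

/-- Corollary 3's smoothing construction: the nested LogSumExp quantities
`ψ_U(α) = LSE({c, LSE({x}; α)}; −α) + log 2/α` and
`ψ_L(α) = LSE({c', LSE({x}; −α)}; α) − log 2/α` are valid conservative smooth bounds:
`ψ_U(α) ≥ min{c, max_i x_i}`, `ψ_L(α) ≤ max{c', min_i x_i}`, and whenever
`max{c', min_i x_i} ≤ min{c, max_i x_i}` we get `ψ_L(α) ≤ ψ_U(α)`. -/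
theorem smoothed_lse_bounds {ι : Type*} (s : Finset ι) (hs : s.Nonempty) (f : ι → ℝ)
    (α c c' : ℝ) (hα : 0 < α) (hc : ∀ i ∈ s, f i ≤ c) :
    min c (s.sup' hs f) ≤ lse2 c (lse s f α) (-α) + Real.log 2 / α ∧
      lse2 c' (lse s f (-α)) α - Real.log 2 / α ≤ max c' (s.inf' hs f) ∧
      (max c' (s.inf' hs f) ≤ min c (s.sup' hs f) →
        lse2 c' (lse s f (-α)) α - Real.log 2 / α ≤
          lse2 c (lse s f α) (-α) + Real.log 2 / α) := by
  have hU : min c (s.sup' hs f) ≤ lse2 c (lse s f α) (-α) + Real.log 2 / α := by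
    have h1 := min_sub_le_lse2 c (lse s f α) hα
    have h2 : min c (s.sup' hs f) ≤ min c (lse s f α) :=
      min_le_min le_rfl (sup'_le_lse s hs f hα)
    linarith
  have hL : lse2 c' (lse s f (-α)) α - Real.log 2 / α ≤ max c' (s.inf' hs f) := by
    have h1 := lse2_le_max_add c' (lse s f (-α)) hα
    have h2 : max c' (lse s f (-α)) ≤ max c' (s.inf' hs f) :=
      max_le_max le_rfl (lse_le_inf' s hs f hα)
    linarith
  exact ⟨hU, hL, fun h => by linarith⟩
end
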